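/- arXiv:2509.03190 — 2 statements merged into one kernel-verified Lean document; each statement's English description precedes it below -/
import Mathlib

section
/- If a connected (P₂+P₃, C₄, C₆, 5-cap)-free graph G contains an induced 5-cycle but no induced 5-apple, and has no pair of comparable vertices, then G is the join of a blowup of C₅ with a complete graph K_p for some p ≥ 0. -/
open SimpleGraph

/-- A proper coloring of `G` with colors in `Fin ℓ`. -/
def IsProperColoring {V : Type*} (G : SimpleGraph V) (ℓ : ℕ) (f : V → Fin ℓ) : Prop :=
  ∀ ⦃a b : V⦄, G.Adj a b → f a ≠ f b

/-- A walk in the reconfiguration graph `R_ℓ(G)`: a sequence `c 0, c 1, …, c m` of proper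
`ℓ`-colorings of `G` in which consecutive colorings differ on at most one vertex. -/
def IsRecolorSeq {V : Type*} (G : SimpleGraph V) (ℓ m : ℕ) (c : ℕ → V → Fin ℓ) : Prop :=
  (∀ i ≤ m, IsProperColoring G ℓ (c i)) ∧
    ∀ i < m, ∀ a b : V, a ≠ b → c i a ≠ c (i + 1) a → c i b = c (i + 1) b

/-- The number of times the vertex `a` is recolored along the sequence `c 0, …, c m`. -/
def recolorCount {V : Type*} {ℓ : ℕ} (m : ℕ) (c : ℕ → V → Fin ℓ) (a : V) : ℕ :=
  ((Finset.range m).filter fun i => c i a ≠ c (i + 1) a).card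

/-- The cycle `Cₙ` on `Fin n` (for `n ≥ 3`). -/
def cyc (n : ℕ) [NeZero n] : SimpleGraph (Fin n) := SimpleGraph.fromRel fun a b => a + 1 = b

/-- The graph `P₂ + P₃`, the disjoint union of an edge and a path on three vertices. -/
def p2p3 : SimpleGraph (Fin 5) := SimpleGraph.fromRel fun a b =>
  (a = 0 ∧ b = 1) ∨ (a = 2 ∧ b = 3) ∨ (a = 3 ∧ b = 4)

/-- The 5-cap: a 5-cycle `0,1,2,3,4` plus the vertex `5` adjacent to exactly `0` and `1`. -/
def cap5 : SimpleGraph (Fin 6) := SimpleGraph.fromRel fun a b =>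
  (a.val < 5 ∧ b.val < 5 ∧ (a.val + 1) % 5 = b.val) ∨ (a = 5 ∧ (b = 0 ∨ b = 1))

/-- The 5-apple: a 5-cycle `0,1,2,3,4` plus the vertex `5` adjacent to exactly `0`. -/
def apple5 : SimpleGraph (Fin 6) := SimpleGraph.fromRel fun a b =>
  (a.val < 5 ∧ b.val < 5 ∧ (a.val + 1) % 5 = b.val) ∨ (a = 5 ∧ b = 0)



instance (n : ℕ) [NeZero n] : DecidableRel (cyc n).Adj :=
  inferInstanceAs (DecidableRel (fromRel _).Adj)

instance : DecidableRel p2p3.Adj := inferInstanceAs (DecidableRel (fromRel _).Adj)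

instance : DecidableRel cap5.Adj := inferInstanceAs (DecidableRel (fromRel _).Adj)

instance : DecidableRel apple5.Adj := inferInstanceAs (DecidableRel (fromRel _).Adj)

def cycRotate (n : ℕ) [NeZero n] (k : Fin n) : cyc n ↪g cyc n where
  toFun i := i + k
  inj' := add_left_injective k
  map_rel_iff' := by simp [cyc, add_right_comm _ k 1]

namespace SimpleGraph.Embedding

variable {V W : Type*} {G : SimpleGraph V} {H : SimpleGraph W}

def update [DecidableEq W] (c : H ↪g G) (j : W) (x : V) (hne : ∀ k, k ≠ j → x ≠ c k)
    (hadj : ∀ k, k ≠ j → (G.Adj x (c k) ↔ H.Adj j k)) : H ↪g G where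
  toFun := Function.update c j x
  inj' a b hab := by
    by_cases ha : a = j <;> by_cases hb : b = j <;> simp [ha, hb] at hab
    · exact ha.trans hb.symm
    · exact (hne b hb hab).elim
    · exact (hne a ha hab.symm).elim
    · exact hab
  map_rel_iff' {a b} := by
    show G.Adj (Function.update c j x a) (Function.update c j x b) ↔ _
    by_cases ha : a = j <;> by_cases hb : b = j
    · simp [ha, hb]
    · simp [ha, hb, hadj b hb]
    · simp [ha, hb, G.adj_comm, H.adj_comm, hadj a ha]
    · simp [ha, hb]

section update

variable [DecidableEq W] (c : H ↪g G) {j : W} {x : V} {hne : ∀ k, k ≠ j → x ≠ c k}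
  {hadj : ∀ k, k ≠ j → (G.Adj x (c k) ↔ H.Adj j k)}

@[simp]
theorem update_apply_self : c.update j x hne hadj j = x := Function.update_self ..

theorem update_apply_of_ne {k : W} (hk : k ≠ j) : c.update j x hne hadj k = c k :=
  Function.update_of_ne hk ..

end update

theorem nonempty_snoc {n : ℕ} {H : SimpleGraph (Fin n)} {H' : SimpleGraph (Fin (n + 1))}
    (c : H ↪g G) {t : V} (ht : t ∉ Set.range c)
    (hH : ∀ i j, H'.Adj i.castSucc j.castSucc ↔ H.Adj i j)
    (hlast : ∀ i, H'.Adj (Fin.last n) i.castSucc ↔ G.Adj t (c i)) : Nonempty (H' ↪g G) := by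
  have hne : ∀ i, t ≠ c i := fun i h => ht ⟨i, h.symm⟩
  refine ⟨⟨⟨Fin.lastCases t c, fun i j hij => ?_⟩, fun {i j} => ?_⟩⟩
  · induction i using Fin.lastCases <;> induction j using Fin.lastCases <;>
      simp_all [c.injective.eq_iff, (hne _).symm]
  · show G.Adj (Fin.lastCases t c i) (Fin.lastCases t c j) ↔ _
    induction i using Fin.lastCases <;> induction j using Fin.lastCases
    · simp
    · simp [hlast]
    · rw [H'.adj_comm, hlast, G.adj_comm]; simp
    · simp [hH]

end SimpleGraph.Embedding

section InducedSubgraphs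

variable {V : Type*} {G : SimpleGraph V}

theorem nonempty_cyc4_embedding {a b c d : V} (hab : G.Adj a b) (hbc : G.Adj b c)
    (hcd : G.Adj c d) (hda : G.Adj d a) (hac : ¬ G.Adj a c) (hbd : ¬ G.Adj b d)
    (hac' : a ≠ c) (hbd' : b ≠ d) : Nonempty (cyc 4 ↪g G) := by
  refine ⟨⟨⟨![a, b, c, d], fun i j hij => ?_⟩, fun {i j} => ?_⟩⟩
  · fin_cases i <;> fin_cases j <;>
      simp_all [hab.ne, hbc.ne, hcd.ne, hda.ne, hab.ne', hbc.ne', hcd.ne', hda.ne', eq_comm]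
  · show G.Adj (![a, b, c, d] i) (![a, b, c, d] j) ↔ _
    fin_cases i <;> fin_cases j <;> simp [G.adj_comm, hda.symm, *] <;> decide

theorem nonempty_p2p3_embedding {a b c d e : V} (hab : G.Adj a b) (hcd : G.Adj c d)
    (hde : G.Adj d e) (hac : ¬ G.Adj a c) (had : ¬ G.Adj a d) (hae : ¬ G.Adj a e)
    (hbc : ¬ G.Adj b c) (hbd : ¬ G.Adj b d) (hbe : ¬ G.Adj b e) (hce : ¬ G.Adj c e)
    (hce' : c ≠ e) : Nonempty (p2p3 ↪g G) := by
  refine ⟨⟨⟨![a, b, c, d, e], fun i j hij => ?_⟩, fun {i j} => ?_⟩⟩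
  · fin_cases i <;> fin_cases j <;>
      simp_all [hab.ne, hcd.ne, hde.ne, hab.ne', hcd.ne', hde.ne', hab.symm, hcd.symm, hde.symm]
  · show G.Adj (![a, b, c, d, e] i) (![a, b, c, d, e] j) ↔ _
    fin_cases i <;> fin_cases j <;> simp [G.adj_comm, *] <;> decide

theorem nonempty_snoc_of_cyc5 {H' : SimpleGraph (Fin 6)}
    (hH : ∀ i j : Fin 5, H'.Adj i.castSucc j.castSucc ↔ (cyc 5).Adj i j)
    (hlast : ∀ m : Fin 5, ∃ i, ¬ (H'.Adj (Fin.last 5) i.castSucc ↔ (cyc 5).Adj m i))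
    (c : cyc 5 ↪g G) (k : Fin 5) (t : V)
    (ht : ∀ i, G.Adj t (c (i + k)) ↔ H'.Adj (Fin.last 5) i.castSucc) : Nonempty (H' ↪g G) := by
  let c' := c.comp (cycRotate 5 k)
  have hc' : ∀ i, c' i = c (i + k) := fun _ => rfl
  have hrange : t ∉ Set.range c' := by
    rintro ⟨m, rfl⟩
    obtain ⟨i, hi⟩ := hlast m
    exact hi (by rw [← ht, ← hc', c'.map_adj_iff])
  exact Embedding.nonempty_snoc c' hrange hH fun i => (ht i).symm

theorem nonempty_apple5_embedding (c : cyc 5 ↪g G) (k : Fin 5) (t : V)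
    (ht : ∀ i, G.Adj t (c i) ↔ i = k) : Nonempty (apple5 ↪g G) := by
  refine nonempty_snoc_of_cyc5 (by decide) (by decide) c k t fun i => ?_
  rw [ht, add_eq_right]
  revert i; decide

theorem nonempty_cap5_embedding (c : cyc 5 ↪g G) (k : Fin 5) (t : V)
    (ht : ∀ i, G.Adj t (c i) ↔ i = k ∨ i = k + 1) : Nonempty (cap5 ↪g G) := by
  refine nonempty_snoc_of_cyc5 (by decide) (by decide) c k t fun i => ?_
  rw [ht, add_eq_right, add_comm k, add_left_inj]
  revert i; decide

end InducedSubgraphs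

section InducedCycle

open Finset

def arc (j : Fin 5) : Finset (Fin 5) := {j + 4, j, j + 1}

theorem mem_arc_iff {j k : Fin 5} : k ∈ arc j ↔ k = j ∨ (cyc 5).Adj j k := by
  revert j k; decide

theorem arc_injective : Function.Injective arc := by
  intro i j; revert i j; decide

theorem arc_ne_univ (j : Fin 5) : arc j ≠ univ := by
  revert j; decide

theorem fin5_eq_add_of_ne {i j : Fin 5} (hij : i ≠ j) :
    j = i + 1 ∨ j = i + 2 ∨ j = i + 3 ∨ j = i + 4 := by
  revert i j; decide

theorem eq_empty_or_eq_univ_or_eq_arc (S : Finset (Fin 5))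
    (hgap : ∀ i, i ∈ S → i + 2 ∈ S → i + 1 ∈ S) (hsingle : ∀ i, S ≠ {i})
    (hpair : ∀ i, S ≠ {i, i + 1}) : S = ∅ ∨ S = univ ∨ ∃ j, S = arc j := by
  revert S; decide

variable {V : Type*} [DecidableEq V] {G : SimpleGraph V} [DecidableRel G.Adj]
  (c : cyc 5 ↪g G) {x y : V} {i j k : Fin 5}

def cycleTrace (x : V) : Finset (Fin 5) := {i | x = c i ∨ G.Adj x (c i)}

theorem mem_cycleTrace : i ∈ cycleTrace c x ↔ x = c i ∨ G.Adj x (c i) := by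
  simp [cycleTrace]

theorem mem_cycleTrace_iff_adj (hx : x ∉ Set.range c) : i ∈ cycleTrace c x ↔ G.Adj x (c i) := by
  rw [mem_cycleTrace, or_iff_right fun h => hx ⟨i, h.symm⟩]

theorem cycleTrace_apply (j : Fin 5) : cycleTrace c (c j) = arc j := by
  ext i; simp [mem_cycleTrace, mem_arc_iff, c.injective.eq_iff, eq_comm]

theorem ne_apply_of_cycleTrace_eq_arc (h : cycleTrace c x = arc j) (hk : k ≠ j) : x ≠ c k := by
  rintro rfl
  exact hk (arc_injective ((cycleTrace_apply c k).symm.trans h))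

theorem adj_apply_iff_of_cycleTrace_eq_arc (h : cycleTrace c x = arc j) (hk : k ≠ j) :
    G.Adj x (c k) ↔ (cyc 5).Adj j k := by
  have := mem_cycleTrace c (x := x) (i := k)
  rw [h, mem_arc_iff] at this
  simpa [hk, ne_apply_of_cycleTrace_eq_arc c h hk] using this.symm

theorem adj_apply_of_cycleTrace_eq_univ (h : cycleTrace c x = univ) (i : Fin 5) :
    G.Adj x (c i) := by
  have hx : x ∉ Set.range c := by
    rintro ⟨j, rfl⟩
    exact arc_ne_univ j ((cycleTrace_apply c j).symm.trans h)
  simp [← mem_cycleTrace_iff_adj c hx, h]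

theorem adj_apply_iff_mem_arc (h : cycleTrace c x = arc j) (hx : x ≠ c j) :
    G.Adj x (c i) ↔ i ∈ arc j := by
  have hne : x ∉ Set.range c := by
    rintro ⟨k, rfl⟩
    obtain rfl | hk := eq_or_ne k j
    exacts [hx rfl, ne_apply_of_cycleTrace_eq_arc c h hk rfl]
  rw [← h, mem_cycleTrace_iff_adj c hne]

theorem adj_pattern_of_cycleTrace_eq_arc (h : cycleTrace c x = arc j) :
    G.Adj x (c (j + 1)) ∧ G.Adj x (c (j + 4)) ∧
      ¬ G.Adj x (c (j + 2)) ∧ ¬ G.Adj x (c (j + 3)) := by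
  refine ⟨?_, ?_, ?_, ?_⟩ <;> rw [adj_apply_iff_of_cycleTrace_eq_arc c h (by simp)] <;>
    simp [cyc, add_assoc]

def cycleUpdate (h : cycleTrace c x = arc j) : cyc 5 ↪g G :=
  c.update j x (fun _ hk => ne_apply_of_cycleTrace_eq_arc c h hk)
    (fun _ hk => adj_apply_iff_of_cycleTrace_eq_arc c h hk)

theorem cycleTrace_trichotomy (hC4 : ¬ Nonempty (cyc 4 ↪g G)) (hcap : ¬ Nonempty (cap5 ↪g G))
    (happle : ¬ Nonempty (apple5 ↪g G)) (hx : x ∉ Set.range c) :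
    cycleTrace c x = ∅ ∨ cycleTrace c x = univ ∨ ∃ j, cycleTrace c x = arc j := by
  have hmem := fun i => mem_cycleTrace_iff_adj c (i := i) hx
  refine eq_empty_or_eq_univ_or_eq_arc _ (fun i hi hi2 => ?_) (fun i hS => ?_) (fun i hS => ?_)
  · rw [hmem] at hi hi2 ⊢
    by_contra hi1
    have h01 : G.Adj (c i) (c (i + 1)) := c.map_adj_iff.2 (by simp [cyc])
    have h12 : G.Adj (c (i + 1)) (c (i + 2)) := c.map_adj_iff.2 (by simp [cyc, add_assoc])
    have h02 : ¬ G.Adj (c i) (c (i + 2)) := mt c.map_adj_iff.1 (by simp [cyc, add_assoc])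
    exact hC4 (nonempty_cyc4_embedding hi h01 h12 hi2.symm hi1 h02 (fun h => hx ⟨_, h.symm⟩)
      (c.injective.ne (by simp)))
  · exact happle (nonempty_apple5_embedding c i x fun k => by rw [← hmem, hS, mem_singleton])
  · exact hcap (nonempty_cap5_embedding c i x fun k => by
      rw [← hmem, hS, mem_insert, mem_singleton])

theorem adj_apply_zero_of_cycleTrace_eq_empty (hP : ¬ Nonempty (p2p3 ↪g G))
    (hC4 : ¬ Nonempty (cyc 4 ↪g G)) (hcap : ¬ Nonempty (cap5 ↪g G))
    (happle : ¬ Nonempty (apple5 ↪g G)) (hx : cycleTrace c x = ∅) (hxy : G.Adj x y) :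
    G.Adj y (c 0) := by
  have hxc : ∀ i, ¬ G.Adj x (c i) := fun i h => by
    simpa [hx] using (mem_cycleTrace c).2 (.inr h)
  have hy : y ∉ Set.range c := by rintro ⟨i, rfl⟩; exact hxc i hxy
  obtain h | h | ⟨j, h⟩ := cycleTrace_trichotomy c hC4 hcap happle hy
  · have hyc : ∀ i, ¬ G.Adj y (c i) := fun i hyi => by
      simpa [h] using (mem_cycleTrace_iff_adj c hy).2 hyi
    exact absurd (nonempty_p2p3_embedding hxy (c.map_adj_iff.2 (by decide))
      (c.map_adj_iff.2 (by decide)) (hxc 0) (hxc 1) (hxc 2) (hyc 0) (hyc 1) (hyc 2)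
      (mt c.map_adj_iff.1 (by decide)) (c.injective.ne (by decide))) hP
  · exact adj_apply_of_cycleTrace_eq_univ c h 0
  · -- substituting `y` for `c j` leaves `x` pendant at `y` on an induced 5-cycle
    refine absurd (nonempty_apple5_embedding (cycleUpdate c h) j x fun i => ?_) happle
    by_cases hi : i = j
    · simp [cycleUpdate, hi, hxy]
    · simp [cycleUpdate, Embedding.update_apply_of_ne _ hi, hi, hxc]

theorem adj_of_cycleTrace_eq_arc (hC4 : ¬ Nonempty (cyc 4 ↪g G)) (hy : cycleTrace c y = arc j)
    (hxy : x ≠ y) (hx1 : G.Adj x (c (j + 1))) (hx4 : G.Adj x (c (j + 4))) : G.Adj x y := by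
  obtain ⟨hy1, hy4, -, -⟩ := adj_pattern_of_cycleTrace_eq_arc c hy
  by_contra h
  exact hC4 (nonempty_cyc4_embedding hy1 hx1.symm hx4 hy4.symm (fun h' => h h'.symm)
    (mt c.map_adj_iff.1 (by simp [cyc, add_assoc])) hxy.symm
    (c.injective.ne (by simp)))

theorem adj_of_cycleTrace_eq_arc_add_one (hcap : ¬ Nonempty (cap5 ↪g G))
    (hx : cycleTrace c x = arc j) (hy : cycleTrace c y = arc (j + 1)) : G.Adj x y := by
  by_cases hyc : y = c (j + 1)
  · exact hyc ▸ (adj_pattern_of_cycleTrace_eq_arc c hx).1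
  by_contra hxy
  -- after substituting `x` for `c j`, `y` sees exactly the positions `j + 1` and `j + 2`
  refine hcap (nonempty_cap5_embedding (cycleUpdate c hx) (j + 1) y fun i => ?_)
  by_cases hi : i = j
  · simp [cycleUpdate, hi, G.adj_comm, hxy, add_assoc]
  · rw [cycleUpdate, Embedding.update_apply_of_ne _ hi, adj_apply_iff_mem_arc c hy hyc]
    simp [arc, add_assoc, hi]

theorem not_adj_of_cycleTrace_eq_arc_add_two (hC4 : ¬ Nonempty (cyc 4 ↪g G))
    (hx : cycleTrace c x = arc j) (hy : cycleTrace c y = arc (j + 2)) : ¬ G.Adj x y := by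
  intro hxy
  obtain ⟨-, hx4, -, hx3⟩ := adj_pattern_of_cycleTrace_eq_arc c hx
  obtain ⟨hy3, -, hy4, -⟩ := adj_pattern_of_cycleTrace_eq_arc c hy
  simp only [add_assoc] at hy3 hy4
  exact hC4 (nonempty_cyc4_embedding hxy hy3 (c.map_adj_iff.2 (by simp [cyc, add_assoc]))
    hx4.symm hx3 hy4 (ne_apply_of_cycleTrace_eq_arc c hx (by simp))
    (ne_apply_of_cycleTrace_eq_arc c hy (by simp)))

theorem adj_iff_of_cycleTrace_eq_arc (hC4 : ¬ Nonempty (cyc 4 ↪g G))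
    (hcap : ¬ Nonempty (cap5 ↪g G)) (hx : cycleTrace c x = arc i) (hy : cycleTrace c y = arc j)
    (hij : i ≠ j) : G.Adj x y ↔ (cyc 5).Adj i j := by
  obtain rfl | rfl | rfl | rfl := fin5_eq_add_of_ne hij
  · exact iff_of_true (adj_of_cycleTrace_eq_arc_add_one c hcap hx hy) (by simp [cyc])
  · exact iff_of_false (not_adj_of_cycleTrace_eq_arc_add_two c hC4 hx hy)
      (by simp [cyc, add_assoc])
  · have hx' : cycleTrace c x = arc (i + 3 + 2) := by simpa [add_assoc] using hx
    exact iff_of_false (fun h => not_adj_of_cycleTrace_eq_arc_add_two c hC4 hy hx' h.symm)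
      (by simp [cyc, add_assoc])
  · have hx' : cycleTrace c x = arc (i + 4 + 1) := by simpa [add_assoc] using hx
    exact iff_of_true (adj_of_cycleTrace_eq_arc_add_one c hcap hy hx').symm
      (by simp [cyc, add_assoc])

theorem adj_of_cycleTrace_eq_univ (hC4 : ¬ Nonempty (cyc 4 ↪g G))
    (hx : cycleTrace c x = univ) (hy : cycleTrace c y = univ) (hxy : x ≠ y) : G.Adj x y := by
  by_contra h
  exact hC4 (nonempty_cyc4_embedding (adj_apply_of_cycleTrace_eq_univ c hx 0)
    (adj_apply_of_cycleTrace_eq_univ c hy 0).symm (adj_apply_of_cycleTrace_eq_univ c hy 2)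
    (adj_apply_of_cycleTrace_eq_univ c hx 2).symm h
    (mt c.map_adj_iff.1 (by decide)) hxy (c.injective.ne (by decide)))

theorem cycleTrace_eq_univ_or_eq_arc (hP : ¬ Nonempty (p2p3 ↪g G))
    (hC4 : ¬ Nonempty (cyc 4 ↪g G)) (hcap : ¬ Nonempty (cap5 ↪g G))
    (happle : ¬ Nonempty (apple5 ↪g G))
    (hcomp : ∀ x, x ≠ c 0 → ¬ G.Adj x (c 0) → ¬ ∀ w, G.Adj x w → G.Adj (c 0) w) (x : V) :
    cycleTrace c x = univ ∨ ∃ j, cycleTrace c x = arc j := by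
  by_cases hx : x ∈ Set.range c
  · obtain ⟨j, rfl⟩ := hx
    exact .inr ⟨j, cycleTrace_apply c j⟩
  obtain h | h | h := cycleTrace_trichotomy c hC4 hcap happle hx
  · refine (hcomp x (fun h' => hx ⟨0, h'.symm⟩) (fun h' => ?_) fun w hw =>
      (adj_apply_zero_of_cycleTrace_eq_empty c hP hC4 hcap happle h hw).symm).elim
    simpa [h] using (mem_cycleTrace c).2 (.inr h')
  · exact .inl h
  · exact .inr h

end InducedCycle

theorem stmt3_general {V : Type*} (G : SimpleGraph V)
    (hP : ¬ Nonempty (p2p3 ↪g G)) (hC4 : ¬ Nonempty (cyc 4 ↪g G))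
    (hcap : ¬ Nonempty (cap5 ↪g G)) (happle : ¬ Nonempty (apple5 ↪g G))
    (v : Fin 5 → V) (hv : Function.Injective v)
    (hC : ∀ i j, G.Adj (v i) (v j) ↔ (cyc 5).Adj i j)
    (hcomp : ¬ ∃ x y : V, x ≠ y ∧ ¬ G.Adj x y ∧
      ((∀ w, G.Adj x w → G.Adj y w) ∨ ∀ w, G.Adj y w → G.Adj x w)) :
    ∃ (Q : Fin 5 → Set V) (K : Set V),
      (∀ i, (Q i).Nonempty) ∧
      (∀ i j, i ≠ j → Disjoint (Q i) (Q j)) ∧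
      (∀ i, Disjoint (Q i) K) ∧
      (∀ x, x ∈ K ∨ ∃ i, x ∈ Q i) ∧
      (∀ i, (Q i).Pairwise G.Adj) ∧
      K.Pairwise G.Adj ∧
      (∀ i j, i ≠ j → ∀ x ∈ Q i, ∀ y ∈ Q j, (G.Adj x y ↔ (cyc 5).Adj i j)) ∧
      (∀ x ∈ K, ∀ i, ∀ y ∈ Q i, G.Adj x y) := by
  classical
  let c : cyc 5 ↪g G := ⟨⟨v, hv⟩, hC _ _⟩
  have hcover := cycleTrace_eq_univ_or_eq_arc c hP hC4 hcap happle
    fun x hx0 hxc hsub => hcomp ⟨x, c 0, hx0, hxc, .inl hsub⟩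
  refine ⟨fun j => {x | cycleTrace c x = arc j}, {x | cycleTrace c x = Finset.univ},
    fun j => ⟨c j, cycleTrace_apply c j⟩,
    fun i j hij => Set.disjoint_left.2 fun x hi hj => hij (arc_injective (hi.symm.trans hj)),
    fun i => Set.disjoint_left.2 fun x hi hK => arc_ne_univ i (hi.symm.trans hK),
    hcover, fun j x hx y hy hxy => ?_,
    fun x hx y hy hxy => adj_of_cycleTrace_eq_univ c hC4 hx hy hxy,
    fun i j hij x hx y hy => adj_iff_of_cycleTrace_eq_arc c hC4 hcap hx hy hij,
    fun x hx j y hy => ?_⟩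
  · obtain ⟨hx1, hx4, -, -⟩ := adj_pattern_of_cycleTrace_eq_arc c hx
    exact adj_of_cycleTrace_eq_arc c hC4 hy hxy hx1 hx4
  · refine adj_of_cycleTrace_eq_arc c hC4 hy (fun h => arc_ne_univ j ?_)
      (adj_apply_of_cycleTrace_eq_univ c hx _) (adj_apply_of_cycleTrace_eq_univ c hx _)
    rw [← hx, ← hy, h]

/-- a connected `(P₂+P₃, C₄, C₆, 5-cap)`-free graph containing an induced
5-cycle but no induced 5-apple, and having no pair of comparable vertices, is the join of a
blowup of `C₅` with a (possibly empty) complete graph. -/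
theorem stmt3 {V : Type*} [Fintype V] (G : SimpleGraph V) (hconn : G.Connected)
    (hP : ¬ Nonempty (p2p3 ↪g G)) (hC4 : ¬ Nonempty (cyc 4 ↪g G))
    (hC6 : ¬ Nonempty (cyc 6 ↪g G)) (hcap : ¬ Nonempty (cap5 ↪g G))
    (happle : ¬ Nonempty (apple5 ↪g G))
    (v : Fin 5 → V) (hv : Function.Injective v)
    (hC : ∀ i j, G.Adj (v i) (v j) ↔ (cyc 5).Adj i j)
    (hcomp : ¬ ∃ x y : V, x ≠ y ∧ ¬ G.Adj x y ∧
      ((∀ w, G.Adj x w → G.Adj y w) ∨ ∀ w, G.Adj y w → G.Adj x w)) :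
    ∃ (Q : Fin 5 → Set V) (K : Set V),
      (∀ i, (Q i).Nonempty) ∧
      (∀ i j, i ≠ j → Disjoint (Q i) (Q j)) ∧
      (∀ i, Disjoint (Q i) K) ∧
      (∀ x, x ∈ K ∨ ∃ i, x ∈ Q i) ∧
      (∀ i, (Q i).Pairwise G.Adj) ∧
      K.Pairwise G.Adj ∧
      (∀ i j, i ≠ j → ∀ x ∈ Q i, ∀ y ∈ Q j, (G.Adj x y ↔ (cyc 5).Adj i j)) ∧
      (∀ x ∈ K, ∀ i, ∀ y ∈ Q i, G.Adj x y) :=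
  stmt3_general G hP hC4 hcap happle v hv hC hcomp
end

section
/- Let G be a graph, ℓ > χ(G), and S ⊆ V(G) an independent set with χ(G) = χ(G−S) + 1. Suppose (i) from any ℓ-coloring of G one can recolor each vertex at most f(n) times to reach an ℓ-coloring in which all vertices of S get a common color not used on G−S, and (ii) between any two (ℓ−1)-colorings of H := G−S there is a path in R_{ℓ−1}(H) recoloring each vertex at most g(|V(H)|) times. Then between any two ℓ-colorings of G there is a path in R_ℓ(G) recoloring each vertex at most 2[f(n) + g(|V(H)|)] + 2 times. -/
/-!
First bring `φ` and `ψ`, at cost `f` each, to colorings in which `S` is a whole color class,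
of colors `c₁` and `c₂`. Since `χ(G - S) ≤ ℓ - 2`, some coloring `θ` of `G - S` avoids both
`c₁` and `c₂`. While `S` is frozen at `c₁`, the other `ℓ - 1` colors form a copy of
`R_{ℓ-1}(G - S)`, so (ii) reaches `θ` at cost `g`; then `S` is moved from `c₁` to `c₂` one
vertex at a time (cost `1`, as `S` is independent and `c₂` is unused on `G - S`), and (ii)
again, with `S` frozen at `c₂`, leads from `θ` to the normal form of `ψ`. In total every
vertex is recolored at most `2f + 2g + 1` times.
-/

open SimpleGraph

open Function

lemma Fin.exists_injective_notMem_range {n : ℕ} (a b : Fin (n + 2)) :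
    ∃ e : Fin n → Fin (n + 2), Injective e ∧ a ∉ Set.range e ∧ b ∉ Set.range e := by
  obtain ⟨b', hb'⟩ : ∃ b', b = a ∨ a.succAbove b' = b := by
    by_cases h : b = a
    · exact ⟨0, .inl h⟩
    · obtain ⟨z, hz⟩ := Fin.exists_succAbove_eq h
      exact ⟨z, .inr hz⟩
  refine ⟨a.succAbove ∘ b'.succAbove, Fin.succAbove_right_injective.comp
    Fin.succAbove_right_injective, fun ⟨x, hx⟩ => Fin.succAbove_ne a _ hx, ?_⟩
  rintro ⟨x, hx⟩
  rcases hb' with rfl | rfl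
  · exact Fin.succAbove_ne _ _ hx
  · exact Fin.succAbove_ne b' x (Fin.succAbove_right_injective hx)

section Reconfiguration

variable {V : Type*} {G : SimpleGraph V} {ℓ : ℕ}

def Reconfigurable (G : SimpleGraph V) (ℓ N : ℕ) (φ ψ : V → Fin ℓ) : Prop :=
  ∃ m c, IsRecolorSeq G ℓ m c ∧ c 0 = φ ∧ c m = ψ ∧ ∀ a, recolorCount m c a ≤ N

lemma IsRecolorSeq.congr {m : ℕ} {c d : ℕ → V → Fin ℓ} (hc : IsRecolorSeq G ℓ m c)
    (h : ∀ i ≤ m, c i = d i) : IsRecolorSeq G ℓ m d := by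
  refine ⟨fun i hi => h i hi ▸ hc.1 i hi, fun i hi a b hab => ?_⟩
  rw [← h i hi.le, ← h (i + 1) hi]
  exact hc.2 i hi a b hab

lemma recolorCount_congr {m : ℕ} {c d : ℕ → V → Fin ℓ} (h : ∀ i ≤ m, c i = d i) (a : V) :
    recolorCount m c a = recolorCount m d a := by
  unfold recolorCount
  congr 1
  refine Finset.filter_congr fun i hi => ?_
  rw [Finset.mem_range] at hi
  rw [h i hi.le, h (i + 1) hi]

lemma IsRecolorSeq.append {m n : ℕ} {c : ℕ → V → Fin ℓ} (h₁ : IsRecolorSeq G ℓ m c)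
    (h₂ : IsRecolorSeq G ℓ n fun i => c (m + i)) : IsRecolorSeq G ℓ (m + n) c := by
  refine ⟨fun i hi => ?_, fun i hi => ?_⟩
  · rcases le_or_gt i m with h | h
    · exact h₁.1 i h
    · simpa [Nat.add_sub_cancel' h.le] using h₂.1 (i - m) (by omega)
  · rcases lt_or_ge i m with h | h
    · exact h₁.2 i h
    · simpa [Nat.add_sub_cancel' h, ← add_assoc] using h₂.2 (i - m) (by omega)

lemma recolorCount_add (m n : ℕ) (c : ℕ → V → Fin ℓ) (a : V) :
    recolorCount (m + n) c a = recolorCount m c a + recolorCount n (fun i => c (m + i)) a := by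
  simp only [recolorCount, Finset.card_filter, Finset.sum_range_add, add_assoc]

lemma IsRecolorSeq.reverse {m : ℕ} {c : ℕ → V → Fin ℓ} (h : IsRecolorSeq G ℓ m c) :
    IsRecolorSeq G ℓ m fun i => c (m - i) := by
  refine ⟨fun i _ => h.1 _ (Nat.sub_le m i), fun i hi a b hab ha => ?_⟩
  have hsucc : m - i = m - (i + 1) + 1 := by omega
  simp only [hsucc] at ha ⊢
  exact (h.2 _ (by omega) a b hab (Ne.symm ha)).symm

lemma recolorCount_reverse (m : ℕ) (c : ℕ → V → Fin ℓ) (a : V) :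
    recolorCount m (fun i => c (m - i)) a = recolorCount m c a := by
  simp only [recolorCount, Finset.card_filter]
  rw [← Finset.sum_range_reflect]
  refine Finset.sum_congr rfl fun i hi => ?_
  rw [Finset.mem_range] at hi
  have h₁ : m - (m - 1 - i) = i + 1 := by omega
  have h₂ : m - (m - 1 - i + 1) = i := by omega
  simp only [h₁, h₂, ne_comm]

namespace Reconfigurable

variable {N N' : ℕ} {φ χ ψ : V → Fin ℓ}

lemma mono (h : Reconfigurable G ℓ N φ ψ) (hN : N ≤ N') : Reconfigurable G ℓ N' φ ψ :=
  let ⟨m, c, hc, h0, hm, hcount⟩ := h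
  ⟨m, c, hc, h0, hm, fun a => (hcount a).trans hN⟩

lemma symm (h : Reconfigurable G ℓ N φ ψ) : Reconfigurable G ℓ N ψ φ := by
  obtain ⟨m, c, hc, rfl, rfl, hcount⟩ := h
  exact ⟨m, fun i => c (m - i), hc.reverse, by simp, by simp,
    fun a => (recolorCount_reverse m c a).trans_le (hcount a)⟩

lemma trans (h₁ : Reconfigurable G ℓ N φ χ) (h₂ : Reconfigurable G ℓ N' χ ψ) :
    Reconfigurable G ℓ (N + N') φ ψ := by
  obtain ⟨m₁, c₁, hc₁, rfl, rfl, hcount₁⟩ := h₁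
  obtain ⟨m₂, c₂, hc₂, hjoin, rfl, hcount₂⟩ := h₂
  set c : ℕ → V → Fin ℓ := fun i => if i ≤ m₁ then c₁ i else c₂ (i - m₁)
  have hfirst : ∀ i ≤ m₁, c₁ i = c i := fun i hi => (if_pos hi).symm
  have hsecond : (fun i => c (m₁ + i)) = c₂ := by
    funext i
    rcases i with _ | i
    · simp [c, hjoin]
    · simp [c]
  refine ⟨m₁ + m₂, c, (hc₁.congr hfirst).append (hsecond ▸ hc₂), (hfirst 0 m₁.zero_le).symm,
    congrFun hsecond m₂, fun a => ?_⟩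
  rw [recolorCount_add, ← recolorCount_congr hfirst, hsecond]
  exact add_le_add (hcount₁ a) (hcount₂ a)

end Reconfigurable

/-- Recolor the vertices where `σ` and `τ` differ one at a time; since they form an
independent set, each intermediate coloring is proper. -/
lemma reconfigurable_one_of_isIndepSet [Fintype V] {σ τ : V → Fin ℓ}
    (hσ : IsProperColoring G ℓ σ) (hτ : IsProperColoring G ℓ τ)
    (hdiff : G.IsIndepSet {v | σ v ≠ τ v}) : Reconfigurable G ℓ 1 σ τ := by
  set e := Fintype.equivFin V
  set c : ℕ → V → Fin ℓ := fun i v => if (e v : ℕ) < i then τ v else σ v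
  have hc : ∀ i v, c i v = τ v ∨ c i v = σ v := fun i v => by
    by_cases h : (e v : ℕ) < i <;> simp [c, h]
  have hfixed : ∀ i v, σ v = τ v → c i v = σ v := fun i v h => by
    rcases hc i v with h' | h' <;> simp [h', h]
  have hproper : ∀ i, IsProperColoring G ℓ (c i) := by
    have key : ∀ i x y, G.Adj x y → σ x = τ x → c i x ≠ c i y := by
      intro i x y hxy hx
      rw [hfixed i x hx]
      rcases hc i y with h | h <;> rw [h]
      exacts [hx ▸ hτ hxy, hσ hxy]
    intro i x y hxy
    by_cases hx : σ x = τ x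
    · exact key i x y hxy hx
    · have hy : σ y = τ y := by_contra fun hy => hdiff hx hy (G.ne_of_adj hxy) hxy
      exact (key i y x hxy.symm hy).symm
  have hstep : ∀ i v, c i v ≠ c (i + 1) v → (e v : ℕ) = i := by
    intro i v hv
    by_contra hne
    have : (e v : ℕ) < i ↔ (e v : ℕ) < i + 1 := by omega
    simp [c, this] at hv
  refine ⟨Fintype.card V, c, ⟨fun i _ => hproper i, fun i _ a b hab ha => ?_⟩,
    by simp [c], by simp [c], fun a => ?_⟩
  · by_contra hb
    exact hab (e.injective (Fin.ext ((hstep i a ha).trans (hstep i b hb).symm)))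
  · calc recolorCount _ c a ≤ ({(e a : ℕ)} : Finset ℕ).card :=
          Finset.card_le_card fun i hi =>
            Finset.mem_singleton.2 (hstep i a (Finset.mem_filter.1 hi).2).symm
      _ = 1 := Finset.card_singleton _

variable {S : Set V}

open Classical in
noncomputable def extendByConst (S : Set V) (col : Fin ℓ) (χ : ↥Sᶜ → Fin ℓ) : V → Fin ℓ :=
  fun v => if h : v ∈ S then col else χ ⟨v, h⟩

lemma extendByConst_of_mem {col : Fin ℓ} (χ : ↥Sᶜ → Fin ℓ) {v : V} (hv : v ∈ S) :
    extendByConst S col χ v = col :=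
  dif_pos hv

lemma extendByConst_of_notMem {col : Fin ℓ} (χ : ↥Sᶜ → Fin ℓ) {v : V} (hv : v ∉ S) :
    extendByConst S col χ v = χ ⟨v, hv⟩ :=
  dif_neg hv

lemma preimage_extendByConst {col : Fin ℓ} {χ : ↥Sᶜ → Fin ℓ} (hχ : ∀ v, χ v ≠ col) :
    extendByConst S col χ ⁻¹' {col} = S := by
  ext v
  by_cases hv : v ∈ S
  · simp [extendByConst_of_mem χ hv, hv]
  · simp [extendByConst_of_notMem χ hv, hv, hχ]

lemma isProperColoring_extendByConst (hS : G.IsIndepSet S) {col : Fin ℓ} {χ : ↥Sᶜ → Fin ℓ}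
    (hχ : IsProperColoring (G.induce Sᶜ) ℓ χ) (hcol : ∀ v, χ v ≠ col) :
    IsProperColoring G ℓ (extendByConst S col χ) := by
  intro a b hab
  by_cases ha : a ∈ S <;> by_cases hb : b ∈ S
  · exact absurd hab (hS ha hb (G.ne_of_adj hab))
  · rw [extendByConst_of_mem χ ha, extendByConst_of_notMem χ hb]
    exact (hcol _).symm
  · rw [extendByConst_of_notMem χ ha, extendByConst_of_mem χ hb]
    exact hcol _
  · rw [extendByConst_of_notMem χ ha, extendByConst_of_notMem χ hb]
    exact hχ hab

lemma IsProperColoring.of_extendByConst {k : ℕ} {col : Fin ℓ} {e : Fin k → Fin ℓ}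
    {χ : ↥Sᶜ → Fin k} (h : IsProperColoring G ℓ (extendByConst S col (e ∘ χ))) :
    IsProperColoring (G.induce Sᶜ) k χ := by
  intro a b hab hχ
  apply h (a := a) (b := b) hab
  rw [extendByConst_of_notMem _ a.2, extendByConst_of_notMem _ b.2]
  simp [hχ]

lemma Reconfigurable.extendByConst_comp {k N : ℕ} {e : Fin k → Fin ℓ} (he : Injective e)
    {col : Fin ℓ} (hcol : col ∉ Set.range e) (hS : G.IsIndepSet S) {φ' ψ' : ↥Sᶜ → Fin k}
    (h : Reconfigurable (G.induce Sᶜ) k N φ' ψ') :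
    Reconfigurable G ℓ N (extendByConst S col (e ∘ φ')) (extendByConst S col (e ∘ ψ')) := by
  obtain ⟨m, c, hc, rfl, rfl, hcount⟩ := h
  have hne : ∀ {i a} (ha : a ∉ S), extendByConst S col (e ∘ c i) a ≠
      extendByConst S col (e ∘ c (i + 1)) a ↔ c i ⟨a, ha⟩ ≠ c (i + 1) ⟨a, ha⟩ := fun ha => by
    simp [extendByConst_of_notMem _ ha, he.eq_iff]
  refine ⟨m, fun i => extendByConst S col (e ∘ c i), ⟨fun i hi => ?_, fun i hi a b hab ha' => ?_⟩,
    rfl, rfl, fun a => ?_⟩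
  · exact isProperColoring_extendByConst hS
      (fun _ _ hxy => he.ne (hc.1 i hi hxy)) fun v hv => hcol ⟨_, hv⟩
  · by_cases ha : a ∈ S
    · simp [extendByConst_of_mem _ ha] at ha'
    by_cases hb : b ∈ S
    · simp [extendByConst_of_mem _ hb]
    by_contra hb'
    exact (hne hb).1 hb' (hc.2 i hi ⟨a, ha⟩ ⟨b, hb⟩ (by simpa using hab) ((hne ha).1 ha'))
  · by_cases ha : a ∈ S
    · simp [recolorCount, extendByConst_of_mem _ ha]
    refine le_trans (Finset.card_le_card fun i => ?_) (hcount ⟨a, ha⟩)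
    simp only [Finset.mem_filter, hne ha, imp_self]

lemma exists_eq_extendByConst_succAbove {n : ℕ} {col : Fin (n + 1)} {φ : V → Fin (n + 1)}
    (h : φ ⁻¹' {col} = S) : ∃ φ' : ↥Sᶜ → Fin n, φ = extendByConst S col (col.succAbove ∘ φ') := by
  have : ∀ v : ↥Sᶜ, ∃ z, col.succAbove z = φ v := fun v =>
    Fin.exists_succAbove_eq fun hv => v.2 (h ▸ hv)
  choose φ' hφ' using this
  refine ⟨φ', funext fun v => ?_⟩
  by_cases hv : v ∈ S
  · rw [extendByConst_of_mem _ hv]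
    exact (Set.ext_iff.1 h v).2 hv
  · rw [extendByConst_of_notMem _ hv, comp_apply, hφ']

lemma reconfigurable_of_preimage_eq {n N : ℕ} (hS : G.IsIndepSet S)
    (hH : ∀ φ' ψ' : ↥Sᶜ → Fin n, IsProperColoring (G.induce Sᶜ) n φ' →
      IsProperColoring (G.induce Sᶜ) n ψ' → Reconfigurable (G.induce Sᶜ) n N φ' ψ')
    {col : Fin (n + 1)} {φ ψ : V → Fin (n + 1)} (hφ : IsProperColoring G (n + 1) φ)
    (hψ : IsProperColoring G (n + 1) ψ) (hφS : φ ⁻¹' {col} = S) (hψS : ψ ⁻¹' {col} = S) :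
    Reconfigurable G (n + 1) N φ ψ := by
  obtain ⟨φ', rfl⟩ := exists_eq_extendByConst_succAbove hφS
  obtain ⟨ψ', rfl⟩ := exists_eq_extendByConst_succAbove hψS
  exact (hH φ' ψ' hφ.of_extendByConst hψ.of_extendByConst).extendByConst_comp
    Fin.succAbove_right_injective (fun ⟨x, hx⟩ => Fin.succAbove_ne col x hx) hS

end Reconfiguration

/-- let `S` be an independent set of `G` with `χ(G) = χ(G−S) + 1` and
`ℓ > χ(G)`. If (i) from any `ℓ`-coloring of `G` one can recolor each vertex at most `fN`
times to reach an `ℓ`-coloring where all of `S` gets a common color unused on `G−S`, and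
(ii) between any two `(ℓ−1)`-colorings of `H := G−S` there is a path in `R_{ℓ−1}(H)`
recoloring each vertex at most `gN` times, then between any two `ℓ`-colorings of `G` there
is a path in `R_ℓ(G)` recoloring each vertex at most `2(fN + gN) + 2` times. -/
theorem stmt8 {V : Type*} [Fintype V] (G : SimpleGraph V) (S : Set V) (ℓ fN gN : ℕ)
    (hind : ∀ x ∈ S, ∀ y ∈ S, ¬ G.Adj x y)
    (hχ : G.chromaticNumber = (G.induce Sᶜ).chromaticNumber + 1)
    (hl : G.chromaticNumber < (ℓ : ℕ∞))
    (hi : ∀ φ : V → Fin ℓ, IsProperColoring G ℓ φ →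
      ∃ m c, IsRecolorSeq G ℓ m c ∧ c 0 = φ ∧ (∀ a : V, recolorCount m c a ≤ fN) ∧
        ∃ col : Fin ℓ, (∀ s ∈ S, c m s = col) ∧ ∀ x ∉ S, c m x ≠ col)
    (hii : ∀ φ' ψ' : ↥(Sᶜ) → Fin (ℓ - 1),
      IsProperColoring (G.induce Sᶜ) (ℓ - 1) φ' → IsProperColoring (G.induce Sᶜ) (ℓ - 1) ψ' →
      ∃ m c, IsRecolorSeq (G.induce Sᶜ) (ℓ - 1) m c ∧ c 0 = φ' ∧ c m = ψ' ∧
        ∀ a, recolorCount m c a ≤ gN) :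
    ∀ φ ψ : V → Fin ℓ, IsProperColoring G ℓ φ → IsProperColoring G ℓ ψ →
      ∃ m c, IsRecolorSeq G ℓ m c ∧ c 0 = φ ∧ c m = ψ ∧
        ∀ a : V, recolorCount m c a ≤ 2 * (fN + gN) + 2 := by
  intro φ ψ hφ hψ
  have hS : G.IsIndepSet S := fun x hx y hy _ => hind x hx y hy
  have hχH : (G.induce Sᶜ).chromaticNumber + 2 ≤ ℓ := by
    rw [hχ] at hl
    rw [← one_add_one_eq_two, ← add_assoc]
    exact Order.add_one_le_of_lt hl
  obtain ⟨n, rfl⟩ : ∃ n, ℓ = n + 2 :=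
    ⟨ℓ - 2, by have : (2 : ℕ∞) ≤ ℓ := le_add_self.trans hχH; norm_cast at this; omega⟩
  obtain ⟨C⟩ : (G.induce Sᶜ).Colorable n :=
    chromaticNumber_le_iff_colorable.1 (by simpa using hχH)
  have hsep : ∀ φ, IsProperColoring G (n + 2) φ → ∃ φ₁ col, Reconfigurable G (n + 2) fN φ φ₁ ∧
      IsProperColoring G (n + 2) φ₁ ∧ φ₁ ⁻¹' {col} = S := by
    intro φ hφ
    obtain ⟨m, c, hc, h0, hcount, col, hcolS, hcolSc⟩ := hi φ hφ
    exact ⟨c m, col, ⟨m, c, hc, h0, rfl, hcount⟩, hc.1 m le_rfl,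
      Set.ext fun x => ⟨fun hx => by_contra fun h => hcolSc x h hx, hcolS x⟩⟩
  obtain ⟨φ₁, col₁, hφφ₁, hφ₁, hφ₁S⟩ := hsep φ hφ
  obtain ⟨ψ₁, col₂, hψψ₁, hψ₁, hψ₁S⟩ := hsep ψ hψ
  obtain ⟨e, he, he₁, he₂⟩ := Fin.exists_injective_notMem_range col₁ col₂
  have hθ : ∀ col ∉ Set.range e, IsProperColoring G (n + 2) (extendByConst S col (e ∘ C)) ∧
      extendByConst S col (e ∘ C) ⁻¹' {col} = S := fun col hcol =>
    ⟨isProperColoring_extendByConst hS (fun _ _ hab => he.ne (C.valid hab))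
      fun v hv => hcol ⟨_, hv⟩, preimage_extendByConst fun v hv => hcol ⟨_, hv⟩⟩
  have h₁ := reconfigurable_of_preimage_eq hS hii hφ₁ (hθ col₁ he₁).1 hφ₁S (hθ col₁ he₁).2
  have h₂ : Reconfigurable G (n + 2) 1 (extendByConst S col₁ (e ∘ C))
      (extendByConst S col₂ (e ∘ C)) := by
    refine reconfigurable_one_of_isIndepSet (hθ col₁ he₁).1 (hθ col₂ he₂).1
      (hS.mono fun v hv => by_contra fun hvS => hv ?_)
    rw [extendByConst_of_notMem _ hvS, extendByConst_of_notMem _ hvS]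
  have h₃ := reconfigurable_of_preimage_eq hS hii (hθ col₂ he₂).1 hψ₁ (hθ col₂ he₂).2 hψ₁S
  exact (hφφ₁.trans (h₁.trans (h₂.trans (h₃.trans hψψ₁.symm)))).mono (by omega)
end
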